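/- Let A and B be admissible linear chains with e(A) + e(B) = 1. Then d(A) = d(B) and e(Aᵀ) + e(Bᵀ) = 1. -/

import Mathlib

/-! The discriminants satisfy the continuant recurrence `d(a :: b :: l) = a d(b :: l) - d(l)`,
which gives `d(A̲) d(A̅) ≡ 1 (mod d(A))` (so `d(A)` and `d(A̅)` are coprime) and, for admissible
chains, `0 < d(A̅), d(A̲) < d(A)`. Clearing denominators in `e(A) + e(B) = 1` gives
`d(A̅) d(B) + d(A) d(B̅) = d(A) d(B)`, so coprimality forces `d(A) = d(B) =: d` and
`d(A̅) + d(B̅) = d`. Then `(d(A̲) + d(B̲)) d(A̅) ≡ 1 - 1 = 0 (mod d)`, so `d` divides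
`d(A̲) + d(B̲) ∈ (0, 2d)`, i.e. `d(A̲) + d(B̲) = d`; this is `e(Aᵀ) + e(Bᵀ) = 1`, because reversing
a chain does not change its discriminant and `(Aᵀ)̅ = (A̲)ᵀ`. -/

/-- The tridiagonal matrix associated to a linear chain `A = [a₁,…,a_r]`:
diagonal entries `aᵢ`, entries `-1` immediately above/below the diagonal, `0` elsewhere. -/
def chainMatrix (A : List ℤ) : Matrix (Fin A.length) (Fin A.length) ℤ :=
  fun i j =>
    if i = j then A.get i
    else if (i : ℕ) + 1 = (j : ℕ) ∨ (j : ℕ) + 1 = (i : ℕ) then -1 else 0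

/-- The discriminant `d(A)` of a linear chain: the determinant of `chainMatrix A`
(the `0 × 0` determinant being `1` for the empty list). -/
def disc (A : List ℤ) : ℤ := (chainMatrix A).det

/-- A linear chain is admissible if it is nonempty and all of its entries are `≥ 2`. -/
def Admissible (A : List ℤ) : Prop := A ≠ [] ∧ ∀ a ∈ A, 2 ≤ a

/-- The inductance `e(A) = d(A̅)/d(A)` of a linear chain, as a rational number. -/
def inductance (A : List ℤ) : ℚ := (disc A.tail : ℚ) / (disc A : ℚ)

theorem Matrix.det_succ_succ_eq_of_row_zero_col_zero {R : Type*} [CommRing R] {n : ℕ}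
    (M : Matrix (Fin (n + 2)) (Fin (n + 2)) R)
    (hrow : ∀ j : Fin n, M 0 j.succ.succ = 0) (hcol : ∀ i : Fin n, M i.succ.succ 0 = 0) :
    M.det = M 0 0 * (M.submatrix Fin.succ Fin.succ).det
      - M 0 1 * M 1 0 * ((M.submatrix Fin.succ Fin.succ).submatrix Fin.succ Fin.succ).det := by
  have hminor : (M.submatrix Fin.succ (Fin.succAbove 1)).det
      = M 1 0 * ((M.submatrix Fin.succ Fin.succ).submatrix Fin.succ Fin.succ).det := by
    rw [Matrix.det_succ_column_zero, Fin.sum_univ_succ]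
    simp [Fin.succAbove, Fin.lt_def, hcol, Matrix.submatrix_submatrix, Function.comp_def]
  rw [Matrix.det_succ_row_zero, Fin.sum_univ_succ, Fin.sum_univ_succ]
  simp only [Fin.coe_ofNat_eq_mod, Nat.zero_mod, pow_zero, one_mul, Fin.succAbove_zero,
    Fin.succ_zero_eq_one, Nat.one_mod, pow_one, neg_mul, hminor, Matrix.submatrix_submatrix,
    Fin.val_succ, hrow, mul_zero, zero_mul, Finset.sum_const_zero, add_zero]
  ring

@[simp]
lemma disc_nil : disc [] = 1 :=
  Matrix.det_fin_zero

@[simp]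
lemma disc_singleton (a : ℤ) : disc [a] = a := by
  simp [disc, chainMatrix]

lemma chainMatrix_cons_submatrix_succ (a : ℤ) (l : List ℤ) :
    (chainMatrix (a :: l)).submatrix Fin.succ Fin.succ = chainMatrix l := by
  ext i j
  simp [chainMatrix, Fin.succ_inj]

lemma disc_cons_cons (a b : ℤ) (l : List ℤ) :
    disc (a :: b :: l) = a * disc (b :: l) - disc l := by
  rw [disc, Matrix.det_succ_succ_eq_of_row_zero_col_zero, chainMatrix_cons_submatrix_succ,
    chainMatrix_cons_submatrix_succ]
  · simp [chainMatrix, disc]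
  · intro j; simp [chainMatrix, Fin.ext_iff]
  · intro i; simp [chainMatrix, Fin.ext_iff]

lemma chainMatrix_reverse (A : List ℤ) :
    chainMatrix A.reverse =
      (chainMatrix A).submatrix ((finCongr A.length_reverse).trans Fin.revPerm)
        ((finCongr A.length_reverse).trans Fin.revPerm) := by
  ext ⟨i, hi⟩ ⟨j, hj⟩
  simp only [List.length_reverse] at hi hj
  simp only [chainMatrix, Matrix.submatrix_apply, Equiv.trans_apply, finCongr_apply,
    Fin.revPerm_apply, Fin.ext_iff, Fin.val_rev, Fin.val_cast, List.get_eq_getElem,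
    List.getElem_reverse]
  by_cases hij : i = j
  · subst hij; simp only [if_true, Nat.sub_sub, Nat.add_comm]
  · rw [if_neg hij, if_neg (show ¬A.length - (i + 1) = A.length - (j + 1) by omega)]
    exact if_congr (by omega) rfl rfl

lemma disc_reverse (A : List ℤ) : disc A.reverse = disc A := by
  rw [disc, chainMatrix_reverse, Matrix.det_submatrix_equiv_self, disc]

lemma one_le_disc_and_disc_lt_disc_cons {a : ℤ} {l : List ℤ} (ha : 2 ≤ a)
    (hl : ∀ x ∈ l, 2 ≤ x) : 1 ≤ disc l ∧ disc l < disc (a :: l) := by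
  induction l generalizing a with
  | nil => simp only [disc_nil, disc_singleton]; omega
  | cons b m ih =>
    obtain ⟨hm, hlt⟩ := ih (hl b List.mem_cons_self) fun x hx => hl x (List.mem_cons_of_mem b hx)
    rw [disc_cons_cons]
    constructor <;> nlinarith

lemma disc_pos_of_forall_two_le {A : List ℤ} (hA : ∀ x ∈ A, 2 ≤ x) : 0 < disc A := by
  cases A with
  | nil => simp
  | cons a l =>
    obtain ⟨hl, hlt⟩ := one_le_disc_and_disc_lt_disc_cons (hA a List.mem_cons_self)
      fun x hx => hA x (List.mem_cons_of_mem a hx)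
    omega

lemma Admissible.disc_pos {A : List ℤ} (hA : Admissible A) : 0 < disc A :=
  disc_pos_of_forall_two_le hA.2

lemma Admissible.disc_tail_lt_disc {A : List ℤ} (hA : Admissible A) : disc A.tail < disc A := by
  obtain ⟨hne, h2⟩ := hA
  cases A with
  | nil => exact absurd rfl hne
  | cons a l =>
    exact (one_le_disc_and_disc_lt_disc_cons (h2 a List.mem_cons_self)
      fun x hx => h2 x (List.mem_cons_of_mem a hx)).2

lemma Admissible.reverse {A : List ℤ} (hA : Admissible A) : Admissible A.reverse :=
  ⟨List.reverse_ne_nil_iff.2 hA.1, fun x hx => hA.2 x (List.mem_reverse.1 hx)⟩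

lemma Admissible.disc_dropLast_lt_disc {A : List ℤ} (hA : Admissible A) :
    disc A.dropLast < disc A := by
  simpa only [List.tail_reverse, disc_reverse] using hA.reverse.disc_tail_lt_disc

lemma Admissible.disc_dropLast_pos {A : List ℤ} (hA : Admissible A) : 0 < disc A.dropLast :=
  disc_pos_of_forall_two_le fun x hx => hA.2 x (List.dropLast_subset A hx)

lemma inductance_reverse (A : List ℤ) :
    inductance A.reverse = (disc A.dropLast : ℚ) / disc A := by
  rw [inductance, List.tail_reverse, disc_reverse, disc_reverse]

lemma disc_cons_dropLast_mul_sub_mul_dropLast (a : ℤ) {B : List ℤ} (hB : B ≠ []) :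
    disc (a :: B.dropLast) * disc B - disc (a :: B) * disc B.dropLast = 1 := by
  induction B generalizing a with
  | nil => exact absurd rfl hB
  | cons b C ih =>
    cases C with
    | nil => simp [disc_cons_cons]
    | cons c D =>
      rw [List.dropLast_cons_cons, disc_cons_cons a b, disc_cons_cons a b]
      linear_combination ih b (List.cons_ne_nil c D)

lemma disc_dropLast_mul_disc_tail_modEq_one {A : List ℤ} (hA : A ≠ []) :
    disc A.dropLast * disc A.tail ≡ 1 [ZMOD disc A] := by
  rw [Int.modEq_iff_dvd]
  cases A with
  | nil => exact absurd rfl hA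
  | cons a B =>
    cases B with
    | nil => simp
    | cons b C =>
      rw [List.tail_cons, List.dropLast_cons_cons]
      exact ⟨-disc (b :: C).dropLast, by
        linear_combination -disc_cons_dropLast_mul_sub_mul_dropLast a (List.cons_ne_nil b C)⟩

lemma isCoprime_disc_disc_tail {A : List ℤ} (hA : A ≠ []) : IsCoprime (disc A) (disc A.tail) := by
  obtain ⟨k, hk⟩ := Int.modEq_iff_dvd.1 (disc_dropLast_mul_disc_tail_modEq_one hA)
  exact ⟨k, disc A.dropLast, by linear_combination -hk⟩

lemma Int.eq_of_mul_add_mul_eq_mul {a b a' b' : ℤ} (ha : 0 < a) (hb : 0 < b)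
    (ha' : IsCoprime a a') (hb' : IsCoprime b b') (h : a' * b + a * b' = a * b) : a = b :=
  Int.dvd_antisymm ha.le hb.le
    (ha'.dvd_of_dvd_mul_left ⟨b - b', by linear_combination h⟩)
    (hb'.dvd_of_dvd_mul_left ⟨a - a', by linear_combination h⟩)

lemma disc_dropLast_add_disc_dropLast {A B : List ℤ} (hA : Admissible A) (hB : Admissible B)
    (hAB : disc A = disc B) (htail : disc A.tail + disc B.tail = disc A) :
    disc A.dropLast + disc B.dropLast = disc A := by
  obtain ⟨u, hu⟩ := Int.modEq_iff_dvd.1 (disc_dropLast_mul_disc_tail_modEq_one hA.1)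
  obtain ⟨v, hv⟩ := Int.modEq_iff_dvd.1 (disc_dropLast_mul_disc_tail_modEq_one hB.1)
  rw [← hAB] at hv
  have hdvd : disc A ∣ (disc A.dropLast + disc B.dropLast) * disc A.tail :=
    ⟨disc B.dropLast - u + v, by linear_combination disc B.dropLast * htail - hu + hv⟩
  obtain ⟨k, hk⟩ := (isCoprime_disc_disc_tail hA.1).dvd_of_dvd_mul_right hdvd
  have hA' := hA.disc_dropLast_lt_disc
  have hB' := hB.disc_dropLast_lt_disc
  have hA0 := hA.disc_dropLast_pos
  have hB0 := hB.disc_dropLast_pos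
  have hk1 : k = 1 := by nlinarith
  rw [hk, hk1, mul_one]

/-- Lemma 2.2 (i): if `A`, `B` are admissible linear chains with `e(A) + e(B) = 1`,
then `d(A) = d(B)` and `e(Aᵀ) + e(Bᵀ) = 1`. -/
theorem inductance_add_eq_one (A B : List ℤ) (hA : Admissible A) (hB : Admissible B)
    (h : inductance A + inductance B = 1) :
    disc A = disc B ∧ inductance A.reverse + inductance B.reverse = 1 := by
  have hApos := hA.disc_pos
  have hBpos := hB.disc_pos
  have key : disc A.tail * disc B + disc A * disc B.tail = disc A * disc B := by
    rw [inductance, inductance, div_add_div _ _ (by positivity) (by positivity),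
      div_eq_one_iff_eq (by positivity)] at h
    exact_mod_cast h
  have hAB : disc A = disc B := Int.eq_of_mul_add_mul_eq_mul hApos hBpos
    (isCoprime_disc_disc_tail hA.1) (isCoprime_disc_disc_tail hB.1) key
  have htail : disc A.tail + disc B.tail = disc A := by
    rw [← hAB] at key
    exact mul_right_cancel₀ hApos.ne' (by linear_combination key)
  refine ⟨hAB, ?_⟩
  rw [inductance_reverse, inductance_reverse, ← hAB, ← add_div, ← Int.cast_add,
    disc_dropLast_add_disc_dropLast hA hB hAB htail, div_self (by positivity)]
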